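/- (Benamou–Brenier verification, Proposition 1.) Let t₀ < t₁, let ρ₀ and ρ₁ be probability densities on ℝⁿ, and let ψ : ℝⁿ × [t₀,t₁] → ℝ be continuously differentiable in t and twice continuously differentiable in x, satisfying the Hamilton–Jacobi equation ∂ψ/∂t + (1/2)‖∇ψ‖² = 0 on ℝⁿ × (t₀,t₁). Let ρ* : ℝⁿ × [t₀,t₁] → ℝ be nonnegative, continuously differentiable, with compact support contained in K × [t₀,t₁] for some compact K ⊆ ℝⁿ, satisfying the continuity equation ∂ρ*/∂t + ∇·(ρ* ∇ψ) = 0 with ρ*(·,t₀) = ρ₀ and ρ*(·,t₁) = ρ₁. Then for every pair (ρ, v) where ρ : ℝⁿ × [t₀,t₁] → ℝ is nonnegative, continuously differentiable, compactly supported in K' × [t₀,t₁] for some compact K' ⊆ ℝⁿ, v : ℝⁿ × [t₀,t₁] → ℝⁿ is continuously differentiable, ∂ρ/∂t + ∇·(v ρ) = 0, ρ(·,t₀) = ρ₀ and ρ(·,t₁) = ρ₁, one has ∫_{t₀}^{t₁} ∫_{ℝⁿ} (1/2)‖v(x,t)‖² ρ(x,t) dx dt ≥ ∫_{t₀}^{t₁}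 ∫_{ℝⁿ} (1/2)‖∇ψ(x,t)‖² ρ*(x,t) dx dt. In particular (ρ*, ∇ψ) solves the Benamou–Brenier fluid-dynamic optimal transport problem from ρ₀ to ρ₁. -/

import Mathlib

open Set MeasureTheory
open scoped RealInnerProductSpace

/-- The divergence in `x` of a vector field `w : ℝⁿ → ℝⁿ`: `∑ i, ∂wᵢ/∂xᵢ`. -/
noncomputable def diver {n : ℕ} (w : EuclideanSpace ℝ (Fin n) → EuclideanSpace ℝ (Fin n))
    (x : EuclideanSpace ℝ (Fin n)) : ℝ :=
  ∑ i : Fin n, fderiv ℝ (fun y => w y i) x (EuclideanSpace.single i 1)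

/-!
For an admissible pair `(ρ, v)`, the continuity equation and the divergence theorem give
`d/dt ∫ ψ ρ dx = ∫ (∂ψ/∂t + ⟪∇ψ, v⟫) ρ dx`, so `∫∫ (∂ψ/∂t + ⟪∇ψ, v⟫) ρ dx dt` only depends on the
endpoint densities. By the Hamilton–Jacobi equation, `∂ψ/∂t + ⟪∇ψ, v⟫ ≤ ½‖v‖²` with equality for
`v = ∇ψ`; integrating against `ρ ≥ 0` and against `ρ*` gives the inequality.

Since `ψ` is only separately regular in `x` and `t`, exchanging the integrals rests on
`∂ψ/∂t = -½‖∇ψ‖² ≤ 0`: `ψ` is antitone in time, hence bounded on compact sets by its values at the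
end times, and `∫ |∂ψ/∂t| dt = ψ(·, t₀) - ψ(·, t₁)`.
-/

open Filter Topology

theorem integral_fderiv_apply_eq_zero {V G : Type*} [NormedAddCommGroup V] [NormedSpace ℝ V]
    [FiniteDimensional ℝ V] [MeasurableSpace V] [BorelSpace V] {μ : Measure V}
    [μ.IsAddHaarMeasure] [NormedAddCommGroup G] [NormedSpace ℝ G] {g : V → G}
    (hg : ContDiff ℝ 1 g) (hgc : HasCompactSupport g) (v : V) :
    ∫ x, fderiv ℝ g x v ∂μ = 0 := by
  have hg' : Integrable (fun x => fderiv ℝ g x v) μ :=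
    ((hg.continuous_fderiv one_ne_zero).clm_apply continuous_const).integrable_of_hasCompactSupport
      (hgc.fderiv_apply (𝕜 := ℝ) v)
  simpa using integral_smul_fderiv_eq_neg_fderiv_smul_of_integrable (μ := μ)
    (f := fun _ => (1 : ℝ)) (v := v) (by simp) (by simpa using hg')
    (by simpa using hg.continuous.integrable_of_hasCompactSupport hgc)
    (fun _ _ => differentiableAt_const _) (fun x _ => hg.differentiable one_ne_zero x)

theorem contDiff_gradient {V : Type*} [NormedAddCommGroup V] [InnerProductSpace ℝ V]
    [CompleteSpace V] {f : V → ℝ} {k m : WithTop ℕ∞} (hf : ContDiff ℝ m f) (hkm : k + 1 ≤ m) :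
    ContDiff ℝ k (gradient f) :=
  (InnerProductSpace.toDual ℝ V).symm.toLinearIsometry.contDiff.comp (hf.fderiv_right hkm)

theorem measurable_deriv_of_measurable_uncurry {α : Type*} [MeasurableSpace α]
    {F : α → ℝ → ℝ} (hF : Measurable (Function.uncurry F)) (hdiff : ∀ x, Differentiable ℝ (F x)) :
    Measurable fun p : α × ℝ => deriv (F p.1) p.2 := by
  have hslope (k : ℕ) : Measurable fun p : α × ℝ =>
      ((k : ℝ) + 1)⁻¹⁻¹ • (F p.1 (p.2 + ((k : ℝ) + 1)⁻¹) - F p.1 p.2) := by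
    have hshift : Measurable fun p : α × ℝ => F p.1 (p.2 + ((k : ℝ) + 1)⁻¹) :=
      hF.comp (measurable_fst.prodMk (measurable_snd.add_const _))
    exact (hshift.sub hF).const_mul _
  refine measurable_of_tendsto_metrizable hslope (tendsto_pi_nhds.2 fun p => ?_)
  have hk : Tendsto (fun k : ℕ => ((k : ℝ) + 1)⁻¹) atTop (𝓝[>] 0) :=
    tendsto_nhdsWithin_iff.2 ⟨tendsto_inv_atTop_zero.comp (tendsto_natCast_atTop_atTop.atTop_add
      tendsto_const_nhds), Eventually.of_forall fun k => mem_Ioi.2 (by positivity)⟩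
  exact ((hdiff p.1 p.2).hasDerivAt.tendsto_slope_zero_right).comp hk

theorem continuous_deriv_snd {V : Type*} [NormedAddCommGroup V] [NormedSpace ℝ V]
    {F : V → ℝ → ℝ} (hF : ContDiff ℝ 1 fun p : V × ℝ => F p.1 p.2) :
    Continuous fun p : V × ℝ => deriv (fun s => F p.1 s) p.2 := by
  have hslice (p : V × ℝ) :
      deriv (fun s => F p.1 s) p.2 = fderiv ℝ (fun q : V × ℝ => F q.1 q.2) p (0, 1) :=
    ((hF.differentiable one_ne_zero p).hasFDerivAt.comp_hasDerivAt (x := p.2)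
      ((hasDerivAt_const p.2 p.1).prodMk (hasDerivAt_id p.2)) :).deriv
  simpa only [hslice] using (hF.continuous_fderiv one_ne_zero).clm_apply continuous_const

theorem setIntegral_integral_deriv_eq_sub {α : Type*} [MeasurableSpace α] {μ : Measure α}
    [SFinite μ] {F : α → ℝ → ℝ} {a b : ℝ} (hab : a ≤ b) (hF : ∀ x, ContDiff ℝ 1 (F x))
    (hint : Integrable (fun p : α × ℝ => deriv (F p.1) p.2)
      (μ.prod (volume.restrict (Ioo a b)))) :
    ∫ t in Ioo a b, ∫ x, deriv (F x) t ∂μ = ∫ x, (F x b - F x a) ∂μ := by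
  rw [← integral_integral_swap hint]
  refine integral_congr_ae (ae_of_all _ fun x => ?_)
  change ∫ t in Ioo a b, deriv (F x) t = F x b - F x a
  rw [← integral_Ioc_eq_integral_Ioo, ← intervalIntegral.integral_of_le hab]
  exact intervalIntegral.integral_deriv_eq_sub (fun s _ => (hF x).differentiable one_ne_zero s)
    (((hF x).continuous_deriv le_rfl).intervalIntegrable _ _)

theorem integrable_prod_of_integral_norm_le {α β : Type*} [MeasurableSpace α]
    [MeasurableSpace β] {μ : Measure α} {ν : Measure β} [SFinite ν] {f : α × β → ℝ}
    (hf : AEStronglyMeasurable f (μ.prod ν)) {s : Set α} (hs : MeasurableSet s) (hμs : μ s ≠ ⊤)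
    {C : ℝ} (h_int : ∀ x, Integrable (fun y => f (x, y)) ν)
    (h_bound : ∀ x ∈ s, ∫ y, ‖f (x, y)‖ ∂ν ≤ C) (h_zero : ∀ x ∉ s, ∀ᵐ y ∂ν, f (x, y) = 0) :
    Integrable f (μ.prod ν) := by
  refine (integrable_prod_iff hf).2 ⟨ae_of_all _ h_int, ?_⟩
  refine ((integrable_indicator_iff hs).2 (integrableOn_const hμs (C := C))).mono'
    hf.norm.integral_prod_right' (ae_of_all _ fun x => ?_)
  rw [Real.norm_of_nonneg (integral_nonneg fun _ => norm_nonneg _)]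
  by_cases hx : x ∈ s
  · simpa [indicator_of_mem hx] using h_bound x hx
  · rw [indicator_of_notMem hx, integral_eq_zero_of_ae]
    filter_upwards [h_zero x hx] with y hy
    simp [hy]

theorem integrableOn_integral_of_continuous_of_support {X : Type*} [TopologicalSpace X]
    [MeasurableSpace X] [OpensMeasurableSpace X] {μ : Measure X}
    [IsLocallyFiniteMeasure μ] {F : X → ℝ → ℝ} (hF : Continuous (Function.uncurry F))
    {K : Set X} (hK : IsCompact K) {a b : ℝ} (hsupp : ∀ t ∈ Icc a b, ∀ x ∉ K, F x t = 0) :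
    IntegrableOn (fun t => ∫ x, F x t ∂μ) (Icc a b) := by
  have hcont : Continuous fun t => ∫ x in K, F x t ∂μ :=
    continuous_parametric_integral_of_continuous (f := fun t x => F x t)
      (hF.comp continuous_swap) hK
  refine (hcont.integrableOn_Icc (μ := volume)).congr_fun (fun t ht => ?_) measurableSet_Icc
  exact setIntegral_eq_integral_of_forall_compl_eq_zero (hsupp t ht)

theorem setIntegral_norm_deriv_mul_le {f g : ℝ → ℝ} {a b C M M' : ℝ} (hab : a ≤ b)
    (hf : ContDiff ℝ 1 f) (hg : ContDiff ℝ 1 g) (hf' : ∀ t ∈ Ioo a b, deriv f t ≤ 0)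
    (hfC : ∀ t ∈ Icc a b, ‖f t‖ ≤ C) (hgM : ∀ t ∈ Icc a b, ‖g t‖ ≤ M)
    (hg'M' : ∀ t ∈ Icc a b, ‖deriv g t‖ ≤ M') :
    ∫ t in Ioo a b, ‖deriv (fun s => f s * g s) t‖ ≤ M * (f a - f b) + C * M' * (b - a) := by
  have hfd := hf.continuous_deriv le_rfl
  have hfd' : IntervalIntegrable (fun t => -deriv f t) volume a b :=
    hfd.neg.intervalIntegrable a b
  have hpoint : ∀ t ∈ Ioo a b, ‖deriv (fun s => f s * g s) t‖ ≤ M * -deriv f t + C * M' := by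
    intro t ht
    have ht' := Ioo_subset_Icc_self ht
    rw [deriv_fun_mul (hf.differentiable one_ne_zero t) (hg.differentiable one_ne_zero t)]
    calc ‖deriv f t * g t + f t * deriv g t‖
        ≤ ‖deriv f t‖ * ‖g t‖ + ‖f t‖ * ‖deriv g t‖ := by
          simpa only [norm_mul] using norm_add_le (deriv f t * g t) (f t * deriv g t)
      _ ≤ -deriv f t * M + C * M' := by
          rw [Real.norm_of_nonpos (hf' t ht)]
          exact add_le_add (mul_le_mul_of_nonneg_left (hgM t ht') (by linarith [hf' t ht]))
            (mul_le_mul (hfC t ht') (hg'M' t ht') (norm_nonneg _)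
              ((norm_nonneg _).trans (hfC t ht')))
      _ = M * -deriv f t + C * M' := by ring
  rw [← integral_Ioc_eq_integral_Ioo, ← intervalIntegral.integral_of_le hab]
  calc ∫ t in a..b, ‖deriv (fun s => f s * g s) t‖
      ≤ ∫ t in a..b, (M * -deriv f t + C * M') :=
        intervalIntegral.integral_mono_on_of_le_Ioo hab
          ((((hf.mul hg).continuous_deriv le_rfl).norm).intervalIntegrable _ _)
          ((continuous_const.mul hfd.neg |>.add continuous_const).intervalIntegrable _ _) hpoint
    _ = M * (f a - f b) + C * M' * (b - a) := by
        rw [intervalIntegral.integral_add (hfd'.const_mul _)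
          intervalIntegrable_const, intervalIntegral.integral_const_mul,
          intervalIntegral.integral_neg, intervalIntegral.integral_deriv_eq_sub
            (fun s _ => hf.differentiable one_ne_zero s) (hfd.intervalIntegrable _ _),
          intervalIntegral.integral_const, smul_eq_mul]
        ring

theorem IsCompact.exists_bound_of_antitoneOn {X : Type*} [TopologicalSpace X] {K : Set X}
    (hK : IsCompact K) {ψ : X → ℝ → ℝ} {a b : ℝ} (hanti : ∀ x, AntitoneOn (ψ x) (Icc a b))
    (ha : Continuous fun x => ψ x a) (hb : Continuous fun x => ψ x b) :
    ∃ C, ∀ x ∈ K, ∀ t ∈ Icc a b, ‖ψ x t‖ ≤ C := by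
  obtain ⟨Ca, hCa⟩ := hK.exists_bound_of_continuousOn ha.continuousOn
  obtain ⟨Cb, hCb⟩ := hK.exists_bound_of_continuousOn hb.continuousOn
  refine ⟨max Ca Cb, fun x hx t ht => ?_⟩
  have hup : ψ x t ≤ ψ x a := hanti x ⟨le_rfl, ht.1.trans ht.2⟩ ht ht.1
  have hlow : ψ x b ≤ ψ x t := hanti x ht ⟨ht.1.trans ht.2, le_rfl⟩ ht.2
  have hCa' := abs_le.1 (Real.norm_eq_abs (ψ x a) ▸ hCa x hx)
  have hCb' := abs_le.1 (Real.norm_eq_abs (ψ x b) ▸ hCb x hx)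
  exact Real.norm_eq_abs _ ▸
    abs_le.2 ⟨by linarith [le_max_right Ca Cb], by linarith [le_max_left Ca Cb]⟩

section EuclideanSpace

variable {n : ℕ}

local notation "ℝⁿ" => EuclideanSpace ℝ (Fin n)

theorem gradient_apply_eq_fderiv (f : ℝⁿ → ℝ) (x : ℝⁿ) (i : Fin n) :
    gradient f x i = fderiv ℝ f x (EuclideanSpace.single i 1) := by
  have h : ⟪gradient f x, EuclideanSpace.single i 1⟫ =
      fderiv ℝ f x (EuclideanSpace.single i 1) := by
    simp [gradient, InnerProductSpace.toDual_symm_apply]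
  rw [← h, EuclideanSpace.inner_single_right]
  simp

theorem diver_smul {f : ℝⁿ → ℝ} {u : ℝⁿ → ℝⁿ} {x : ℝⁿ} (hf : DifferentiableAt ℝ f x)
    (hu : ∀ i, DifferentiableAt ℝ (fun y => u y i) x) :
    diver (fun y => f y • u y) x = ⟪gradient f x, u x⟫ + f x * diver u x := by
  have hterm (i : Fin n) : fderiv ℝ (fun y => (f y • u y) i) x (EuclideanSpace.single i 1)
      = u x i * gradient f x i
        + f x * fderiv ℝ (fun y => u y i) x (EuclideanSpace.single i 1) := by
    rw [show (fun y => (f y • u y) i) = fun y => f y * u y i from rfl, fderiv_fun_mul hf (hu i),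
      gradient_apply_eq_fderiv]
    simp only [add_apply, smul_apply, smul_eq_mul]
    ring
  simp only [diver, hterm, Finset.sum_add_distrib, ← Finset.mul_sum, PiLp.inner_apply,
    RCLike.inner_apply, conj_trivial]

theorem continuous_diver {w : ℝⁿ → ℝⁿ} (hw : ContDiff ℝ 1 w) : Continuous (diver w) :=
  continuous_finsetSum _ fun i _ =>
    ((contDiff_euclidean.1 hw i).continuous_fderiv one_ne_zero).clm_apply continuous_const

theorem support_diver_subset (w : ℝⁿ → ℝⁿ) : Function.support (diver w) ⊆ tsupport w := by
  intro x hx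
  by_contra hxw
  refine hx (Finset.sum_eq_zero fun i _ => ?_)
  rw [fderiv_of_notMem_tsupport (𝕜 := ℝ) (f := fun y => w y i) fun hi =>
    hxw (tsupport_comp_subset (g := fun u : ℝⁿ => u i) rfl w hi), zero_apply]

theorem integral_diver_eq_zero {w : ℝⁿ → ℝⁿ} (hw : ContDiff ℝ 1 w)
    (hwc : HasCompactSupport w) : ∫ x, diver w x = 0 := by
  have hcoord := contDiff_euclidean.1 hw
  have hcoordc (i : Fin n) : HasCompactSupport fun y => w y i :=
    hwc.comp_left (g := fun u : ℝⁿ => u i) rfl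
  simp only [diver]
  rw [integral_finsetSum _ fun i _ => (((hcoord i).continuous_fderiv one_ne_zero).clm_apply
    continuous_const).integrable_of_hasCompactSupport ((hcoordc i).fderiv_apply (𝕜 := ℝ) _)]
  exact Finset.sum_eq_zero fun i _ => integral_fderiv_apply_eq_zero (hcoord i) (hcoordc i) _

variable {ψ ρ : EuclideanSpace ℝ (Fin n) → ℝ → ℝ}
  {v : EuclideanSpace ℝ (Fin n) → ℝ → EuclideanSpace ℝ (Fin n)} {t₀ t₁ : ℝ}
  {K : Set (EuclideanSpace ℝ (Fin n))}

theorem integral_deriv_mul_eq_integral_deriv_add_inner_gradient_mul {t : ℝ}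
    (hψt : ∀ x, DifferentiableAt ℝ (fun s => ψ x s) t) (hψx : ContDiff ℝ 1 fun x => ψ x t)
    (hψt' : Continuous fun x => deriv (fun s => ψ x s) t)
    (hρ : ContDiff ℝ 1 fun p : ℝⁿ × ℝ => ρ p.1 p.2) (hv : ContDiff ℝ 1 fun x => v x t)
    (hρc : HasCompactSupport fun x => ρ x t)
    (hcont : ∀ x, deriv (fun s => ρ x s) t + diver (fun y => ρ y t • v y t) x = 0) :
    Integrable (fun x =>
        (deriv (fun s => ψ x s) t + ⟪gradient (fun y => ψ y t) x, v x t⟫) * ρ x t) ∧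
      ∫ x, deriv (fun s => ψ x s * ρ x s) t =
        ∫ x, (deriv (fun s => ψ x s) t + ⟪gradient (fun y => ψ y t) x, v x t⟫) * ρ x t := by
  have hρx : ContDiff ℝ 1 fun x => ρ x t := hρ.comp (contDiff_id.prodMk contDiff_const)
  have hρv : ContDiff ℝ 1 fun y => ρ y t • v y t := hρx.smul hv
  have hW : ContDiff ℝ 1 fun y => ψ y t • (ρ y t • v y t) := hψx.smul hρv
  have hWc : HasCompactSupport fun y => ψ y t • (ρ y t • v y t) :=
    hρc.mono (Function.support_subset_iff'.2 fun y hy => by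
      rw [Function.notMem_support.1 hy, zero_smul, smul_zero])
  have hpoint (x : ℝⁿ) : deriv (fun s => ψ x s * ρ x s) t =
      (deriv (fun s => ψ x s) t + ⟪gradient (fun y => ψ y t) x, v x t⟫) * ρ x t
        - diver (fun y => ψ y t • (ρ y t • v y t)) x := by
    have hρt : DifferentiableAt ℝ (fun s => ρ x s) t :=
      (hρ.comp (contDiff_const.prodMk contDiff_id)).differentiable one_ne_zero t
    rw [deriv_fun_mul (hψt x) hρt, diver_smul (hψx.differentiable one_ne_zero x) fun i =>
      (contDiff_euclidean.1 hρv i).differentiable one_ne_zero x, real_inner_smul_right]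
    linear_combination ψ x t * hcont x
  have hL : Integrable fun x =>
      (deriv (fun s => ψ x s) t + ⟪gradient (fun y => ψ y t) x, v x t⟫) * ρ x t :=
    ((hψt'.add ((contDiff_gradient (k := 0) hψx (by norm_num)).continuous.inner
      hv.continuous)).mul hρx.continuous).integrable_of_hasCompactSupport hρc.mul_left
  refine ⟨hL, ?_⟩
  rw [integral_congr_ae (ae_of_all _ hpoint), integral_sub hL
    ((continuous_diver hW).integrable_of_hasCompactSupport (hWc.mono' (support_diver_subset _))),
    integral_diver_eq_zero hW hWc, sub_zero]

theorem integrable_deriv_mul_prod (hab : t₀ ≤ t₁) (hψt : ∀ x, ContDiff ℝ 1 fun t => ψ x t)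
    (hψx : ∀ t, Continuous fun x => ψ x t)
    (hψ_anti : ∀ x, ∀ t ∈ Ioo t₀ t₁, deriv (fun s => ψ x s) t ≤ 0)
    (hρ : ContDiff ℝ 1 fun p : ℝⁿ × ℝ => ρ p.1 p.2) (hK : IsCompact K)
    (hsupp : ∀ t ∈ Icc t₀ t₁, ∀ x ∉ K, ρ x t = 0) :
    Integrable (fun p : ℝⁿ × ℝ => deriv (fun s => ψ p.1 s * ρ p.1 s) p.2)
      (volume.prod (volume.restrict (Ioo t₀ t₁))) := by
  have hρt (x : ℝⁿ) : ContDiff ℝ 1 fun s => ρ x s :=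
    hρ.comp (contDiff_const.prodMk contDiff_id)
  have hmeas : Measurable fun p : ℝⁿ × ℝ => deriv (fun s => ψ p.1 s * ρ p.1 s) p.2 := by
    have hψm : Measurable (Function.uncurry ψ) :=
      (measurable_uncurry_of_continuous_of_measurable (u := fun t x => ψ x t)
        (fun x => (hψt x).continuous) fun t => (hψx t).measurable).comp measurable_swap
    exact measurable_deriv_of_measurable_uncurry (F := fun x s => ψ x s * ρ x s)
      (hψm.mul hρ.continuous.measurable) fun x =>
        ((hψt x).mul (hρt x)).differentiable one_ne_zero
  obtain ⟨C, hC⟩ := hK.exists_bound_of_antitoneOn (fun x => antitoneOn_of_deriv_nonpos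
    (convex_Icc t₀ t₁) (hψt x).continuous.continuousOn
    (fun s _ => ((hψt x).differentiable one_ne_zero s).differentiableWithinAt)
    (by simpa only [interior_Icc] using hψ_anti x)) (hψx t₀) (hψx t₁)
  have hKI := hK.prod (isCompact_Icc (a := t₀) (b := t₁))
  obtain ⟨M, hM⟩ := hKI.exists_bound_of_continuousOn hρ.continuous.continuousOn
  obtain ⟨M', hM'⟩ := hKI.exists_bound_of_continuousOn (continuous_deriv_snd hρ).continuousOn
  refine integrable_prod_of_integral_norm_le hmeas.aestronglyMeasurable hK.measurableSet
    hK.measure_lt_top.ne (C := M * (2 * C) + C * M' * (t₁ - t₀)) (fun x => ?_) (fun x hx => ?_)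
    (fun x hx => ?_)
  · exact (((hψt x).mul (hρt x)).continuous_deriv le_rfl).integrableOn_Icc.mono_set
      Ioo_subset_Icc_self
  · refine (setIntegral_norm_deriv_mul_le hab (hψt x) (hρt x) (hψ_anti x) (hC x hx)
      (fun t ht => hM (x, t) ⟨hx, ht⟩) (fun t ht => hM' (x, t) ⟨hx, ht⟩)).trans ?_
    have hM0 : 0 ≤ M := (norm_nonneg _).trans (hM (x, t₀) ⟨hx, left_mem_Icc.2 hab⟩)
    have hψ₀ := abs_le.1 (Real.norm_eq_abs _ ▸ hC x hx t₀ (left_mem_Icc.2 hab))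
    have hψ₁ := abs_le.1 (Real.norm_eq_abs _ ▸ hC x hx t₁ (right_mem_Icc.2 hab))
    nlinarith
  · filter_upwards [ae_restrict_mem measurableSet_Ioo] with t ht
    have hzero : (fun s => ψ x s * ρ x s) =ᶠ[𝓝 t] fun _ => 0 := by
      filter_upwards [Ioo_mem_nhds ht.1 ht.2] with s hs
      rw [hsupp s (Ioo_subset_Icc_self hs) x hx, mul_zero]
    exact hzero.deriv_eq.trans (deriv_const t 0)

theorem setIntegral_integral_deriv_add_inner_gradient_mul_eq (hab : t₀ ≤ t₁)
    (hψt : ∀ x, ContDiff ℝ 1 fun t => ψ x t) (hψx : ∀ t, ContDiff ℝ 1 fun x => ψ x t)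
    (hHJ : ∀ x, ∀ t ∈ Ioo t₀ t₁,
      deriv (fun s => ψ x s) t + (1 / 2) * ‖gradient (fun y => ψ y t) x‖ ^ 2 = 0)
    (hρ : ContDiff ℝ 1 fun p : ℝⁿ × ℝ => ρ p.1 p.2) (hK : IsCompact K)
    (hsupp : ∀ t ∈ Icc t₀ t₁, ∀ x ∉ K, ρ x t = 0)
    (hv : ∀ t ∈ Ioo t₀ t₁, ContDiff ℝ 1 fun x => v x t)
    (hcont : ∀ x, ∀ t ∈ Ioo t₀ t₁,
      deriv (fun s => ρ x s) t + diver (fun y => ρ y t • v y t) x = 0) :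
    (∀ t ∈ Ioo t₀ t₁, Integrable fun x =>
        (deriv (fun s => ψ x s) t + ⟪gradient (fun y => ψ y t) x, v x t⟫) * ρ x t) ∧
      IntegrableOn (fun t => ∫ x,
        (deriv (fun s => ψ x s) t + ⟪gradient (fun y => ψ y t) x, v x t⟫) * ρ x t) (Ioo t₀ t₁) ∧
      ∫ t in Ioo t₀ t₁, ∫ x,
        (deriv (fun s => ψ x s) t + ⟪gradient (fun y => ψ y t) x, v x t⟫) * ρ x t =
        ∫ x, (ψ x t₁ * ρ x t₁ - ψ x t₀ * ρ x t₀) := by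
  have hψ_anti (x : ℝⁿ) (t : ℝ) (ht : t ∈ Ioo t₀ t₁) : deriv (fun s => ψ x s) t ≤ 0 := by
    nlinarith [hHJ x t ht, sq_nonneg ‖gradient (fun y => ψ y t) x‖]
  have hψ_cont (t : ℝ) (ht : t ∈ Ioo t₀ t₁) : Continuous fun x => deriv (fun s => ψ x s) t := by
    simp_rw [eq_neg_of_add_eq_zero_left (hHJ _ t ht)]
    exact (((contDiff_gradient (k := 0) (hψx t) (by norm_num)).continuous.norm.pow 2).const_mul
      _).neg
  have hspace (t : ℝ) (ht : t ∈ Ioo t₀ t₁) :=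
    integral_deriv_mul_eq_integral_deriv_add_inner_gradient_mul
      (fun x => (hψt x).differentiable one_ne_zero t) (hψx t) (hψ_cont t ht) hρ (hv t ht)
      (HasCompactSupport.intro hK (hsupp t (Ioo_subset_Icc_self ht))) (hcont · t ht)
  have hprod := integrable_deriv_mul_prod hab hψt (fun t => (hψx t).continuous) hψ_anti hρ hK
    hsupp
  refine ⟨fun t ht => (hspace t ht).1, ?_, ?_⟩
  · exact hprod.integral_prod_right.congr
      ((ae_restrict_iff' measurableSet_Ioo).2 (ae_of_all _ fun t ht => (hspace t ht).2))
  · rw [← setIntegral_congr_fun measurableSet_Ioo fun t ht => (hspace t ht).2]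
    exact setIntegral_integral_deriv_eq_sub hab (fun x => (hψt x).mul
      (hρ.comp (contDiff_const.prodMk contDiff_id))) hprod

theorem kineticAction_gradient_eq (hab : t₀ ≤ t₁)
    (hψt : ∀ x, ContDiff ℝ 1 fun t => ψ x t) (hψx : ∀ t, ContDiff ℝ 2 fun x => ψ x t)
    (hHJ : ∀ x, ∀ t ∈ Ioo t₀ t₁,
      deriv (fun s => ψ x s) t + (1 / 2) * ‖gradient (fun y => ψ y t) x‖ ^ 2 = 0)
    (hρ : ContDiff ℝ 1 fun p : ℝⁿ × ℝ => ρ p.1 p.2) (hK : IsCompact K)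
    (hsupp : ∀ t ∈ Icc t₀ t₁, ∀ x ∉ K, ρ x t = 0)
    (hcont : ∀ x, ∀ t ∈ Ioo t₀ t₁, deriv (fun s => ρ x s) t
      + diver (fun y => ρ y t • gradient (fun z => ψ z t) y) x = 0) :
    ∫ t in t₀..t₁, ∫ x, (1 / 2) * ‖gradient (fun y => ψ y t) x‖ ^ 2 * ρ x t =
      ∫ x, (ψ x t₁ * ρ x t₁ - ψ x t₀ * ρ x t₀) := by
  rw [intervalIntegral.integral_of_le hab, integral_Ioc_eq_integral_Ioo,
    ← (setIntegral_integral_deriv_add_inner_gradient_mul_eq hab hψt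
      (fun t => (hψx t).of_le one_le_two) hHJ hρ hK hsupp
      (fun t _ => contDiff_gradient (hψx t) (by norm_num)) hcont).2.2]
  refine setIntegral_congr_fun measurableSet_Ioo fun t ht =>
    integral_congr_ae (ae_of_all _ fun x => ?_)
  dsimp only
  rw [real_inner_self_eq_norm_sq]
  linear_combination -ρ x t * hHJ x t ht

theorem integral_boundary_le_kineticAction (hab : t₀ ≤ t₁)
    (hψt : ∀ x, ContDiff ℝ 1 fun t => ψ x t) (hψx : ∀ t, ContDiff ℝ 1 fun x => ψ x t)
    (hHJ : ∀ x, ∀ t ∈ Ioo t₀ t₁,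
      deriv (fun s => ψ x s) t + (1 / 2) * ‖gradient (fun y => ψ y t) x‖ ^ 2 = 0)
    (hρpos : ∀ x t, 0 ≤ ρ x t) (hρ : ContDiff ℝ 1 fun p : ℝⁿ × ℝ => ρ p.1 p.2)
    (hK : IsCompact K) (hsupp : ∀ t ∈ Icc t₀ t₁, ∀ x ∉ K, ρ x t = 0)
    (hv : ContDiff ℝ 1 fun p : ℝⁿ × ℝ => v p.1 p.2)
    (hcont : ∀ x, ∀ t ∈ Ioo t₀ t₁,
      deriv (fun s => ρ x s) t + diver (fun y => ρ y t • v y t) x = 0) :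
    ∫ x, (ψ x t₁ * ρ x t₁ - ψ x t₀ * ρ x t₀) ≤
      ∫ t in t₀..t₁, ∫ x, (1 / 2) * ‖v x t‖ ^ 2 * ρ x t := by
  obtain ⟨hpair, hpair_int, hpair_eq⟩ :=
    setIntegral_integral_deriv_add_inner_gradient_mul_eq hab hψt hψx hHJ hρ hK hsupp
      (fun t _ => hv.comp (contDiff_id.prodMk contDiff_const)) hcont
  have hkin : Continuous (Function.uncurry fun x t => (1 / 2) * ‖v x t‖ ^ 2 * ρ x t) :=
    (continuous_const.mul (hv.continuous.norm.pow 2)).mul hρ.continuous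
  have hkin_supp (t : ℝ) (ht : t ∈ Icc t₀ t₁) (x : ℝⁿ) (hx : x ∉ K) :
      (1 / 2) * ‖v x t‖ ^ 2 * ρ x t = 0 := by
    rw [hsupp t ht x hx, mul_zero]
  rw [intervalIntegral.integral_of_le hab, integral_Ioc_eq_integral_Ioo, ← hpair_eq]
  refine setIntegral_mono_on hpair_int
    ((integrableOn_integral_of_continuous_of_support hkin hK hkin_supp).mono_set
      Ioo_subset_Icc_self) measurableSet_Ioo fun t ht => ?_
  refine integral_mono (hpair t ht) ((hkin.comp (continuous_id.prodMk continuous_const))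
    |>.integrable_of_hasCompactSupport (HasCompactSupport.intro hK
      (hkin_supp t (Ioo_subset_Icc_self ht)))) fun x => ?_
  -- by the Hamilton–Jacobi equation, the left side is `⟪∇ψ, v⟫ - ½‖∇ψ‖² ≤ ½‖v‖²`
  have hpoint : deriv (fun s => ψ x s) t + ⟪gradient (fun y => ψ y t) x, v x t⟫ ≤
      (1 / 2) * ‖v x t‖ ^ 2 := by
    nlinarith [hHJ x t ht, real_inner_le_norm (gradient (fun y => ψ y t) x) (v x t),
      sq_nonneg (‖gradient (fun y => ψ y t) x‖ - ‖v x t‖)]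
  exact mul_le_mul_of_nonneg_right hpoint (hρpos x t)

end EuclideanSpace

theorem benamou_brenier_verification_general {n : ℕ} (t₀ t₁ : ℝ) (h01 : t₀ < t₁)
    (ρ₀ ρ₁ : EuclideanSpace ℝ (Fin n) → ℝ)
    (ψ : EuclideanSpace ℝ (Fin n) → ℝ → ℝ)
    (hψt : ∀ x, ContDiff ℝ 1 fun t => ψ x t)
    (hψx : ∀ t : ℝ, ContDiff ℝ 2 fun x => ψ x t)
    (hHJ : ∀ x, ∀ t ∈ Set.Ioo t₀ t₁,
      deriv (fun s => ψ x s) t + (1 / 2) * ‖gradient (fun y => ψ y t) x‖ ^ 2 = 0)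
    (ρs : EuclideanSpace ℝ (Fin n) → ℝ → ℝ)
    (hρsC1 : ContDiff ℝ 1 fun p : EuclideanSpace ℝ (Fin n) × ℝ => ρs p.1 p.2)
    (K : Set (EuclideanSpace ℝ (Fin n))) (hK : IsCompact K)
    (hρssupp : ∀ t ∈ Set.Icc t₀ t₁, ∀ x ∉ K, ρs x t = 0)
    (hρscont : ∀ x, ∀ t ∈ Set.Ioo t₀ t₁,
      deriv (fun s => ρs x s) t
        + diver (fun y => ρs y t • gradient (fun z => ψ z t) y) x = 0)
    (hρs0 : ∀ x, ρs x t₀ = ρ₀ x) (hρs1 : ∀ x, ρs x t₁ = ρ₁ x)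
    (ρ : EuclideanSpace ℝ (Fin n) → ℝ → ℝ)
    (v : EuclideanSpace ℝ (Fin n) → ℝ → EuclideanSpace ℝ (Fin n))
    (hρpos : ∀ x t, 0 ≤ ρ x t)
    (hρC1 : ContDiff ℝ 1 fun p : EuclideanSpace ℝ (Fin n) × ℝ => ρ p.1 p.2)
    (K' : Set (EuclideanSpace ℝ (Fin n))) (hK' : IsCompact K')
    (hρsupp : ∀ t ∈ Set.Icc t₀ t₁, ∀ x ∉ K', ρ x t = 0)
    (hvC1 : ContDiff ℝ 1 fun p : EuclideanSpace ℝ (Fin n) × ℝ => v p.1 p.2)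
    (hρcont : ∀ x, ∀ t ∈ Set.Ioo t₀ t₁,
      deriv (fun s => ρ x s) t + diver (fun y => ρ y t • v y t) x = 0)
    (hρ0 : ∀ x, ρ x t₀ = ρ₀ x) (hρ1 : ∀ x, ρ x t₁ = ρ₁ x) :
    (∫ t in t₀..t₁, ∫ x, (1 / 2) * ‖gradient (fun y => ψ y t) x‖ ^ 2 * ρs x t) ≤
      ∫ t in t₀..t₁, ∫ x, (1 / 2) * ‖v x t‖ ^ 2 * ρ x t := by
  calc (∫ t in t₀..t₁, ∫ x, (1 / 2) * ‖gradient (fun y => ψ y t) x‖ ^ 2 * ρs x t)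
      = ∫ x, (ψ x t₁ * ρs x t₁ - ψ x t₀ * ρs x t₀) :=
        kineticAction_gradient_eq h01.le hψt hψx hHJ hρsC1 hK hρssupp hρscont
    _ = ∫ x, (ψ x t₁ * ρ x t₁ - ψ x t₀ * ρ x t₀) := by simp only [hρs0, hρs1, hρ0, hρ1]
    _ ≤ ∫ t in t₀..t₁, ∫ x, (1 / 2) * ‖v x t‖ ^ 2 * ρ x t :=
        integral_boundary_le_kineticAction h01.le hψt (fun t => (hψx t).of_le one_le_two) hHJ
          hρpos hρC1 hK' hρsupp hvC1 hρcont

/-- **Benamou–Brenier verification, Proposition 1.**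
If `ψ` solves the Hamilton–Jacobi equation `∂ψ/∂t + (1/2)‖∇ψ‖² = 0` and `ρ*` solves the
continuity equation with velocity `∇ψ` interpolating the probability densities `ρ₀, ρ₁`,
then the pair `(ρ*, ∇ψ)` minimizes the kinetic action among all pairs `(ρ, v)` solving the
continuity equation with the same endpoint densities. -/
theorem benamou_brenier_verification {n : ℕ} (t₀ t₁ : ℝ) (h01 : t₀ < t₁)
    (ρ₀ ρ₁ : EuclideanSpace ℝ (Fin n) → ℝ)
    (hρ₀pos : ∀ x, 0 ≤ ρ₀ x) (hρ₁pos : ∀ x, 0 ≤ ρ₁ x)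
    (hρ₀int : ∫ x, ρ₀ x = 1) (hρ₁int : ∫ x, ρ₁ x = 1)
    (ψ : EuclideanSpace ℝ (Fin n) → ℝ → ℝ)
    (hψt : ∀ x, ContDiff ℝ 1 fun t => ψ x t)
    (hψx : ∀ t : ℝ, ContDiff ℝ 2 fun x => ψ x t)
    (hHJ : ∀ x, ∀ t ∈ Set.Ioo t₀ t₁,
      deriv (fun s => ψ x s) t + (1 / 2) * ‖gradient (fun y => ψ y t) x‖ ^ 2 = 0)
    (ρs : EuclideanSpace ℝ (Fin n) → ℝ → ℝ)
    (hρspos : ∀ x t, 0 ≤ ρs x t)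
    (hρsC1 : ContDiff ℝ 1 fun p : EuclideanSpace ℝ (Fin n) × ℝ => ρs p.1 p.2)
    (K : Set (EuclideanSpace ℝ (Fin n))) (hK : IsCompact K)
    (hρssupp : ∀ t ∈ Set.Icc t₀ t₁, ∀ x ∉ K, ρs x t = 0)
    (hρscont : ∀ x, ∀ t ∈ Set.Ioo t₀ t₁,
      deriv (fun s => ρs x s) t
        + diver (fun y => ρs y t • gradient (fun z => ψ z t) y) x = 0)
    (hρs0 : ∀ x, ρs x t₀ = ρ₀ x) (hρs1 : ∀ x, ρs x t₁ = ρ₁ x)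
    (ρ : EuclideanSpace ℝ (Fin n) → ℝ → ℝ)
    (v : EuclideanSpace ℝ (Fin n) → ℝ → EuclideanSpace ℝ (Fin n))
    (hρpos : ∀ x t, 0 ≤ ρ x t)
    (hρC1 : ContDiff ℝ 1 fun p : EuclideanSpace ℝ (Fin n) × ℝ => ρ p.1 p.2)
    (K' : Set (EuclideanSpace ℝ (Fin n))) (hK' : IsCompact K')
    (hρsupp : ∀ t ∈ Set.Icc t₀ t₁, ∀ x ∉ K', ρ x t = 0)
    (hvC1 : ContDiff ℝ 1 fun p : EuclideanSpace ℝ (Fin n) × ℝ => v p.1 p.2)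
    (hρcont : ∀ x, ∀ t ∈ Set.Ioo t₀ t₁,
      deriv (fun s => ρ x s) t + diver (fun y => ρ y t • v y t) x = 0)
    (hρ0 : ∀ x, ρ x t₀ = ρ₀ x) (hρ1 : ∀ x, ρ x t₁ = ρ₁ x) :
    (∫ t in t₀..t₁, ∫ x, (1 / 2) * ‖gradient (fun y => ψ y t) x‖ ^ 2 * ρs x t) ≤
      ∫ t in t₀..t₁, ∫ x, (1 / 2) * ‖v x t‖ ^ 2 * ρ x t :=
  benamou_brenier_verification_general t₀ t₁ h01 ρ₀ ρ₁ ψ hψt hψx hHJ ρs hρsC1 K hK hρssupp hρscont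
    hρs0 hρs1 ρ v hρpos hρC1 K' hK' hρsupp hvC1 hρcont hρ0 hρ1
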